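/- Let N ≥ 2 be a natural number, M_N the IAM matrix, D = diag(−1, 1), and k ≥ 1 a natural number. For every vector v ∈ ℝ^(2^k) with Euclidean norm ‖v‖ ≤ 1/√N, the k-fold Kronecker powers satisfy ‖M_N^{⊗k} · v − D^{⊗k} · v‖ ≤ 2k/N. (This is the first part of the paper's Theorem on cubic IAM structures: the cubic composition C_k of IAM operators agrees with a composition of reflections I_i up to an error O(1/N) on vectors of norm O(1/√N).) -/
import Mathlib


open Matrix

/-- The 2×2 inversion-about-the-mean matrix. -/
noncomputable def IAMM (N : ℕ) : Matrix (Fin 2) (Fin 2) ℝ :=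
  !![-(1 - 2 / (N : ℝ)), 2 * Real.sqrt ((N : ℝ) - 1) / (N : ℝ);
     2 * Real.sqrt ((N : ℝ) - 1) / (N : ℝ), 1 - 2 / (N : ℝ)]

/-- The `k`-fold Kronecker power of a 2×2 matrix, indexed by `Fin k → Fin 2`. -/
noncomputable def kronPow (A : Matrix (Fin 2) (Fin 2) ℝ) (k : ℕ) :
    Matrix (Fin k → Fin 2) (Fin k → Fin 2) ℝ :=
  fun i j => ∏ t : Fin k, A (i t) (j t)

/-! ### Auxiliary matrix lemmas: single-site operators -/

section Sites

variable {k : ℕ}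

/-- The matrix acting as `A` on the sites in `S` and as the identity elsewhere. -/
noncomputable def sitesP (A : Matrix (Fin 2) (Fin 2) ℝ) (S : Finset (Fin k)) :
    Matrix (Fin k → Fin 2) (Fin k → Fin 2) ℝ :=
  fun i j => ∏ t : Fin k, if t ∈ S then A (i t) (j t) else (if i t = j t then (1:ℝ) else 0)

lemma sitesP_mul (A B : Matrix (Fin 2) (Fin 2) ℝ) (S T : Finset (Fin k)) :
    sitesP A S * sitesP B T = fun i j => ∏ t : Fin k,
      if t ∈ S then (if t ∈ T then (A * B) (i t) (j t) else A (i t) (j t))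
      else (if t ∈ T then B (i t) (j t) else (if i t = j t then (1:ℝ) else 0)) := by
  funext i j
  show ∑ m : Fin k → Fin 2, sitesP A S i m * sitesP B T m j = _
  have : ∀ m : Fin k → Fin 2, sitesP A S i m * sitesP B T m j
      = ∏ t : Fin k, ((if t ∈ S then A (i t) (m t) else (if i t = m t then (1:ℝ) else 0)) *
          (if t ∈ T then B (m t) (j t) else (if m t = j t then (1:ℝ) else 0))) := by
    intro m
    rw [sitesP, sitesP, ← Finset.prod_mul_distrib]
  simp only [this]
  rw [← Fintype.prod_sum (fun (t : Fin k) (x : Fin 2) =>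
    (if t ∈ S then A (i t) x else if i t = x then (1:ℝ) else 0) *
    (if t ∈ T then B x (j t) else if x = j t then (1:ℝ) else 0))]
  refine Finset.prod_congr rfl fun t _ => ?_
  by_cases hS : t ∈ S <;> by_cases hT : t ∈ T <;>
    simp [hS, hT, Fin.sum_univ_two, Matrix.mul_apply, eq_comm]

lemma sitesP_mul_disjoint (A : Matrix (Fin 2) (Fin 2) ℝ) (S T : Finset (Fin k))
    (h : Disjoint S T) : sitesP A S * sitesP A T = sitesP A (S ∪ T) := by
  rw [sitesP_mul]
  funext i j
  refine Finset.prod_congr rfl fun t _ => ?_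
  by_cases hS : t ∈ S <;> by_cases hT : t ∈ T <;>
    simp [hS, hT, Finset.mem_union]
  exact absurd (h.forall_ne_finset hS hT) (by simp)

lemma sitesP_mul_single (A B : Matrix (Fin 2) (Fin 2) ℝ) (t : Fin k) :
    sitesP A {t} * sitesP B {t} = sitesP (A * B) {t} := by
  rw [sitesP_mul]
  funext i j
  refine Finset.prod_congr rfl fun s _ => ?_
  by_cases hs : s ∈ ({t} : Finset (Fin k)) <;> simp [hs]

lemma sitesP_one (S : Finset (Fin k)) : sitesP (1 : Matrix (Fin 2) (Fin 2) ℝ) S = 1 := by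
  funext i j
  show _ = (1 : Matrix (Fin k → Fin 2) (Fin k → Fin 2) ℝ) i j
  rw [Matrix.one_apply]
  by_cases h : i = j
  · subst h; simp [sitesP, Matrix.one_apply]
  · obtain ⟨t, ht⟩ := Function.ne_iff.mp h
    rw [sitesP, if_neg h]
    refine Finset.prod_eq_zero (Finset.mem_univ t) ?_
    simp [Matrix.one_apply, ht]

lemma sitesP_single_apply (A : Matrix (Fin 2) (Fin 2) ℝ) (t : Fin k) (i j : Fin k → Fin 2) :
    sitesP A {t} i j = A (i t) (j t) *
      ∏ s ∈ Finset.univ.erase t, (if i s = j s then (1:ℝ) else 0) := by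
  rw [sitesP, ← Finset.mul_prod_erase Finset.univ _ (Finset.mem_univ t)]
  simp only [Finset.mem_singleton, if_pos rfl]
  congr 1
  refine Finset.prod_congr rfl fun s hs => ?_
  rw [if_neg (by simpa using (Finset.mem_erase.mp hs).1)]

lemma sitesP_sub (A B : Matrix (Fin 2) (Fin 2) ℝ) (t : Fin k) :
    sitesP (A - B) {t} = sitesP A {t} - sitesP B {t} := by
  funext i j
  show _ = sitesP A {t} i j - sitesP B {t} i j
  simp only [sitesP_single_apply, Matrix.sub_apply, sub_mul]

lemma sitesP_smul (c : ℝ) (A : Matrix (Fin 2) (Fin 2) ℝ) (t : Fin k) :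
    sitesP (c • A) {t} = c • sitesP A {t} := by
  funext i j
  show _ = c * sitesP A {t} i j
  simp only [sitesP_single_apply, Matrix.smul_apply, smul_eq_mul, mul_assoc]

lemma sitesP_star (A : Matrix (Fin 2) (Fin 2) ℝ) (S : Finset (Fin k)) :
    star (sitesP A S) = sitesP (star A) S := by
  funext i j
  show (sitesP A S)ᴴ i j = _
  rw [Matrix.conjTranspose_apply, sitesP, sitesP]
  rw [star_trivial]
  refine Finset.prod_congr rfl fun t _ => ?_
  simp [Matrix.star_eq_conjTranspose, Matrix.conjTranspose_apply, eq_comm]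

lemma sitesP_empty (A : Matrix (Fin 2) (Fin 2) ℝ) : sitesP A (∅ : Finset (Fin k)) = 1 := by
  funext i j
  show _ = (1 : Matrix (Fin k → Fin 2) (Fin k → Fin 2) ℝ) i j
  rw [Matrix.one_apply, sitesP]
  simp only [Finset.notMem_empty, if_false]
  by_cases h : i = j
  · subst h; simp
  · obtain ⟨t, ht⟩ := Function.ne_iff.mp h
    rw [if_neg h]
    exact Finset.prod_eq_zero (Finset.mem_univ t) (by simp [ht])

lemma sitesP_list_prod (A : Matrix (Fin 2) (Fin 2) ℝ) (l : List (Fin k)) (hl : l.Nodup) :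
    (l.map (fun t => sitesP A {t})).prod = sitesP A l.toFinset := by
  induction l with
  | nil => rw [List.map_nil, List.prod_nil, List.toFinset_nil, sitesP_empty]
  | cons a l ih =>
    rw [List.map_cons, List.prod_cons, ih hl.of_cons,
      sitesP_mul_disjoint _ _ _ (by simp [List.nodup_cons.mp hl]), List.toFinset_cons]
    rw [show ({a} ∪ l.toFinset : Finset (Fin k)) = insert a l.toFinset from by ext x; simp]

lemma kronPow_eq_sitesP (A : Matrix (Fin 2) (Fin 2) ℝ) :
    kronPow A k = sitesP A Finset.univ := by
  funext i j; simp [kronPow, sitesP]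

lemma kronPow_eq_list_prod (A : Matrix (Fin 2) (Fin 2) ℝ) :
    kronPow A k = ((List.finRange k).map (fun t => sitesP A {t})).prod := by
  rw [sitesP_list_prod A (List.finRange k) (List.nodup_finRange k), List.toFinset_finRange,
    kronPow_eq_sitesP]

end Sites

/-! ### Auxiliary norm lemmas -/

lemma norm_of_star_mul_self {n : Type*} [Fintype n] [DecidableEq n] [Nonempty n]
    (T : EuclideanSpace ℝ n →L[ℝ] EuclideanSpace ℝ n) (c : ℝ) (hc : 0 ≤ c)
    (h : star T * T = c • 1) : ‖T‖ = Real.sqrt c := by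
  have h1 : ‖star T * T‖ = ‖T‖ * ‖T‖ := by
    rw [ContinuousLinearMap.star_eq_adjoint, ContinuousLinearMap.mul_def]
    exact ContinuousLinearMap.norm_adjoint_comp_self T
  have h2 : ‖c • (1 : EuclideanSpace ℝ n →L[ℝ] EuclideanSpace ℝ n)‖ = c := by
    haveI : Nontrivial (EuclideanSpace ℝ n) := inferInstance
    rw [norm_smul c (1 : EuclideanSpace ℝ n →L[ℝ] EuclideanSpace ℝ n), norm_one,
      Real.norm_eq_abs, abs_of_nonneg hc, mul_one]
  have h3 : ‖T‖ * ‖T‖ = c := by rw [← h1, h, h2]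
  rw [← h3, Real.sqrt_mul_self (norm_nonneg T)]

lemma list_prod_norm_le_one {R : Type*} [NormedRing R] [NormOneClass R] {ι : Type*}
    (f : ι → R) : ∀ l : List ι, (∀ t ∈ l, ‖f t‖ ≤ 1) → ‖(l.map f).prod‖ ≤ 1 := by
  intro l
  induction l with
  | nil => simp
  | cons a l ih =>
    intro h
    rw [List.map_cons, List.prod_cons]
    calc ‖f a * (l.map f).prod‖ ≤ ‖f a‖ * ‖(l.map f).prod‖ := norm_mul_le _ _
    _ ≤ 1 * 1 := mul_le_mul (h a (by simp)) (ih fun t ht => h t (by simp [ht]))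
        (norm_nonneg _) zero_le_one
    _ = 1 := by ring

lemma list_prod_telescope {R : Type*} [NormedRing R] [NormOneClass R] {ι : Type*}
    (f g : ι → R) (ε : ℝ) (hε : 0 ≤ ε) :
    ∀ l : List ι, (∀ t ∈ l, ‖f t‖ ≤ 1) → (∀ t ∈ l, ‖g t‖ ≤ 1) → (∀ t ∈ l, ‖f t - g t‖ ≤ ε) →
    ‖(l.map f).prod - (l.map g).prod‖ ≤ l.length * ε := by
  intro l
  induction l with
  | nil => simp
  | cons a l ih =>
    intro hf hg hfg
    have hf' : ∀ t ∈ l, ‖f t‖ ≤ 1 := fun t ht => hf t (by simp [ht])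
    have hg' : ∀ t ∈ l, ‖g t‖ ≤ 1 := fun t ht => hg t (by simp [ht])
    have hfg' : ∀ t ∈ l, ‖f t - g t‖ ≤ ε := fun t ht => hfg t (by simp [ht])
    have ihl := ih hf' hg' hfg'
    rw [List.map_cons, List.prod_cons, List.map_cons, List.prod_cons]
    have key : f a * (l.map f).prod - g a * (l.map g).prod
        = (f a - g a) * (l.map f).prod + g a * ((l.map f).prod - (l.map g).prod) := by
      noncomm_ring
    rw [key]
    have h1 : ‖(f a - g a) * (l.map f).prod‖ ≤ ε := by
      calc ‖(f a - g a) * (l.map f).prod‖ ≤ ‖f a - g a‖ * ‖(l.map f).prod‖ := norm_mul_le _ _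
      _ ≤ ε * 1 := mul_le_mul (hfg a (by simp)) (list_prod_norm_le_one f l hf')
          (norm_nonneg _) hε
      _ = ε := by ring
    have h2 : ‖g a * ((l.map f).prod - (l.map g).prod)‖ ≤ l.length * ε := by
      calc ‖g a * ((l.map f).prod - (l.map g).prod)‖
          ≤ ‖g a‖ * ‖(l.map f).prod - (l.map g).prod‖ := norm_mul_le _ _
      _ ≤ 1 * (l.length * ε) := mul_le_mul (hg a (by simp)) ihl (norm_nonneg _) zero_le_one
      _ = l.length * ε := by ring
    calc ‖_ + _‖ ≤ ε + l.length * ε := le_trans (norm_add_le _ _) (add_le_add h1 h2)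
    _ = (l.length + 1) * ε := by ring
    _ = ((a :: l).length : ℝ) * ε := by push_cast [List.length_cons]; ring

/-! ### 2×2 computations -/

section TwoByTwo

variable (N : ℕ) (hN : 2 ≤ N)
include hN

lemma hNR : (2:ℝ) ≤ (N:ℝ) := by exact_mod_cast hN
lemma hN0 : (N:ℝ) ≠ 0 := by have := hNR N hN; linarith
lemma hsq : Real.sqrt ((N:ℝ) - 1) * Real.sqrt ((N:ℝ) - 1) = (N:ℝ) - 1 :=
  Real.mul_self_sqrt (by have := hNR N hN; linarith)

omit hN in
lemma IAMM_star : star (IAMM N) = IAMM N := by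
  rw [Matrix.star_eq_conjTranspose]
  ext i j
  fin_cases i <;> fin_cases j <;> simp [IAMM, Matrix.conjTranspose_apply]

lemma IAMM_mul_self : IAMM N * IAMM N = 1 := by
  have h0 := hN0 N hN
  have hs := hsq N hN
  ext i j
  fin_cases i <;> fin_cases j <;>
    simp [IAMM, Matrix.mul_apply, Fin.sum_univ_two, Matrix.one_apply] <;>
    field_simp <;> nlinarith [hs]

omit hN in
lemma Dm_star : star !![(-1 : ℝ), 0; 0, 1] = !![(-1 : ℝ), 0; 0, 1] := by
  rw [Matrix.star_eq_conjTranspose]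
  ext i j
  fin_cases i <;> fin_cases j <;> simp [Matrix.conjTranspose_apply]

omit hN in
lemma Dm_mul_self : !![(-1 : ℝ), 0; 0, 1] * !![(-1 : ℝ), 0; 0, 1] = 1 := by
  ext i j
  fin_cases i <;> fin_cases j <;>
    simp [Matrix.mul_apply, Fin.sum_univ_two, Matrix.one_apply]

lemma Err_mul_self : star (IAMM N - !![(-1 : ℝ), 0; 0, 1]) * (IAMM N - !![(-1 : ℝ), 0; 0, 1])
    = ((4:ℝ)/(N:ℝ)) • 1 := by
  have h0 := hN0 N hN
  have hs := hsq N hN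
  rw [star_sub, IAMM_star N, Dm_star]
  ext i j
  fin_cases i <;> fin_cases j <;>
    simp [IAMM, Matrix.mul_apply, Fin.sum_univ_two,
      Matrix.one_apply, Matrix.sub_apply, Matrix.smul_apply] <;>
    field_simp <;> nlinarith [hs]

end TwoByTwo

/-! ### Main theorem -/

theorem cubic_iam_approx_on_small_vectors (N : ℕ) (hN : 2 ≤ N) (k : ℕ) (hk : 1 ≤ k)
    (v : EuclideanSpace ℝ (Fin k → Fin 2)) (hv : ‖v‖ ≤ 1 / Real.sqrt N) :
    ‖Matrix.toEuclideanCLM (𝕜 := ℝ) (kronPow (IAMM N) k) v -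
      Matrix.toEuclideanCLM (𝕜 := ℝ) (kronPow !![(-1 : ℝ), 0; 0, 1] k) v‖
      ≤ 2 * k / N := by
  have hNR' : (2:ℝ) ≤ (N:ℝ) := by exact_mod_cast hN
  have hNpos : (0:ℝ) < (N:ℝ) := by linarith
  set M := IAMM N with hM
  set D := !![(-1 : ℝ), 0; 0, 1] with hD
  set toC := Matrix.toEuclideanCLM (𝕜 := ℝ) (n := Fin k → Fin 2) with htoC
  set f : Fin k → (EuclideanSpace ℝ (Fin k → Fin 2) →L[ℝ] EuclideanSpace ℝ (Fin k → Fin 2)) :=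
    fun t => toC (sitesP M {t}) with hf
  set g : Fin k → (EuclideanSpace ℝ (Fin k → Fin 2) →L[ℝ] EuclideanSpace ℝ (Fin k → Fin 2)) :=
    fun t => toC (sitesP D {t}) with hg
  -- expressing the Kronecker powers as products
  have hprodM : toC (kronPow M k) = ((List.finRange k).map f).prod := by
    rw [kronPow_eq_list_prod, map_list_prod toC, List.map_map]
    rfl
  have hprodD : toC (kronPow D k) = ((List.finRange k).map g).prod := by
    rw [kronPow_eq_list_prod, map_list_prod toC, List.map_map]
    rfl
  -- norms of single-site operators
  have hfnorm : ∀ t : Fin k, ‖f t‖ = 1 := by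
    intro t
    have hstar : star (f t) * f t = (1:ℝ) • 1 := by
      rw [hf]
      simp only
      rw [← map_star toC, sitesP_star, ← map_mul toC, sitesP_mul_single,
        IAMM_star N, IAMM_mul_self N hN, sitesP_one, _root_.map_one, one_smul]
    rw [norm_of_star_mul_self (f t) 1 zero_le_one hstar, Real.sqrt_one]
  have hgnorm : ∀ t : Fin k, ‖g t‖ = 1 := by
    intro t
    have hstar : star (g t) * g t = (1:ℝ) • 1 := by
      rw [hg]
      simp only
      rw [← map_star toC, sitesP_star, ← map_mul toC, sitesP_mul_single,
        Dm_star, Dm_mul_self, sitesP_one, _root_.map_one, one_smul]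
    rw [norm_of_star_mul_self (g t) 1 zero_le_one hstar, Real.sqrt_one]
  have hfgnorm : ∀ t : Fin k, ‖f t - g t‖ = Real.sqrt (4 / N) := by
    intro t
    have hsub : f t - g t = toC (sitesP (M - D) {t}) := by
      rw [hf, hg]
      simp only
      rw [sitesP_sub, map_sub]
    have hstar : star (f t - g t) * (f t - g t) = ((4:ℝ)/(N:ℝ)) • 1 := by
      rw [hsub, ← map_star toC, sitesP_star, ← map_mul toC, sitesP_mul_single,
        Err_mul_self N hN, sitesP_smul, sitesP_one, _root_.map_smul, _root_.map_one]
    exact norm_of_star_mul_self _ _ (by positivity) hstar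
  -- telescoping
  have hεnn : (0:ℝ) ≤ Real.sqrt (4 / N) := Real.sqrt_nonneg _
  have htel : ‖((List.finRange k).map f).prod - ((List.finRange k).map g).prod‖
      ≤ k * Real.sqrt (4 / N) := by
    have := list_prod_telescope f g (Real.sqrt (4 / N)) hεnn (List.finRange k)
      (fun t _ => (hfnorm t).le) (fun t _ => (hgnorm t).le) (fun t _ => (hfgnorm t).le)
    simpa using this
  -- conclude
  have hsub : toC (kronPow M k) v - toC (kronPow D k) v
      = (toC (kronPow M k) - toC (kronPow D k)) v := by
    rw [ContinuousLinearMap.sub_apply]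
  rw [hsub]
  calc ‖(toC (kronPow M k) - toC (kronPow D k)) v‖
      ≤ ‖toC (kronPow M k) - toC (kronPow D k)‖ * ‖v‖ :=
        ContinuousLinearMap.le_opNorm _ _
    _ ≤ (k * Real.sqrt (4 / N)) * (1 / Real.sqrt N) := by
        apply mul_le_mul _ hv (norm_nonneg _) (by positivity)
        rw [hprodM, hprodD]
        exact htel
    _ = 2 * k / N := by
        have h4 : Real.sqrt (4 / N) = 2 / Real.sqrt N := by
          rw [Real.sqrt_div (by norm_num : (0:ℝ) ≤ 4),
            show Real.sqrt 4 = 2 by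
              rw [show (4:ℝ) = 2^2 by norm_num, Real.sqrt_sq (by norm_num : (0:ℝ) ≤ 2)]]
        have h2 : Real.sqrt N * Real.sqrt N = N := Real.mul_self_sqrt hNpos.le
        rw [h4, show (k:ℝ) * (2 / Real.sqrt N) * (1 / Real.sqrt N)
          = 2 * k / (Real.sqrt N * Real.sqrt N) by ring, h2]
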